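/- arXiv:2002.06847 — 4 statements merged into one kernel-verified Lean document; each statement's English description precedes it below -/
import Mathlib

section
/- Let A be a unital locally matrix algebra over a field F and let A' be a unital subalgebra of A with 1_A ∈ A' and an F-algebra isomorphism A' ≅ M_n(F) for some n ≥ 1. Let C be the centralizer of A' in A. Then A is isomorphic as an F-algebra to A' ⊗_F C, and hence to the matrix algebra M_n(C). -/
/-!
An isomorphism `A' ≅ M_n(F)` provides matrix units `e i j ∈ A'`: `e i j * e k l = δ_jk e i l`
and `∑ i, e i i = 1`. For any such system in an algebra `A`, with `C` the commutant of the
`e i j`, the maps `(c i j) ↦ ∑ c i j * e i j` and `a ↦ (∑ k, e k i * a * e j k) i j` are mutually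
inverse algebra maps `M_n(C) ≃ A`. Since the `e i j` span `A'`, `C` is the centralizer of `A'`,
and `M_n(C) ≅ M_n(F) ⊗ C ≅ A' ⊗ C`.
-/

open scoped TensorProduct

/-- A unital locally matrix algebra over a field `F`: every finite subset lies in a
unital subalgebra (automatically containing `1`) isomorphic to a full matrix algebra
`M_n(F)` for some `n ≥ 1`. -/
def IsUnitalLocallyMatrix (F : Type*) [Field F] (A : Type*) [Ring A] [Algebra F A] : Prop :=
  ∀ s : Finset A, ∃ (n : ℕ) (B : Subalgebra F A), 1 ≤ n ∧ (↑s : Set A) ⊆ B ∧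
    Nonempty (B ≃ₐ[F] Matrix (Fin n) (Fin n) F)

/-- `D(A)`: the set of positive integers `n` such that `A` has a unital subalgebra
(containing `1`) isomorphic to `M_n(F)`. -/
def matrixDegrees (F : Type*) [Field F] (A : Type*) [Ring A] [Algebra F A] : Set ℕ :=
  {n | 1 ≤ n ∧ ∃ B : Subalgebra F A, Nonempty (B ≃ₐ[F] Matrix (Fin n) (Fin n) F)}

open Matrix

structure IsMatrixUnits {ι A : Type*} [Fintype ι] [DecidableEq ι] [Semiring A]
    (e : ι → ι → A) : Prop where
  mul_eq : ∀ i j k l, e i j * e k l = if j = k then e i l else 0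
  sum_diag : ∑ i, e i i = 1

theorem Matrix.isMatrixUnits_single (R ι : Type*) [Semiring R] [Fintype ι] [DecidableEq ι] :
    IsMatrixUnits fun i j : ι => single i j (1 : R) where
  mul_eq i j k l := by
    split_ifs with h
    · subst h; rw [single_mul_single_same, one_mul]
    · exact single_mul_single_of_ne (h := h) ..
  sum_diag := sum_single_one

namespace IsMatrixUnits

section Commutant

variable (R : Type*) {ι A : Type*} [CommSemiring R] [Semiring A] [Algebra R A]

abbrev commutant (e : ι → ι → A) : Subalgebra R A :=
  Subalgebra.centralizer R (Set.range (Function.uncurry e))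

variable {R}

theorem mem_commutant_iff {e : ι → ι → A} {c : A} :
    c ∈ commutant R e ↔ ∀ i j, e i j * c = c * e i j := by
  simp only [Subalgebra.mem_centralizer_iff, Set.forall_mem_range, Prod.forall,
    Function.uncurry_apply_pair]

end Commutant

variable {R ι A B : Type*} [Fintype ι] [DecidableEq ι] [Semiring A] [Semiring B] {e : ι → ι → A}

theorem map (he : IsMatrixUnits e) {F : Type*} [FunLike F A B] [RingHomClass F A B] (f : F) :
    IsMatrixUnits fun i j => f (e i j) where
  mul_eq i j k l := by rw [← map_mul, he.mul_eq, apply_ite f, map_zero]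
  sum_diag := by rw [← map_sum, he.sum_diag, map_one]

variable [CommSemiring R] [Algebra R A]

theorem mul_mul_eq (he : IsMatrixUnits e) {c : A} (hc : c ∈ commutant R e) (i j k l : ι) :
    e i j * (c * e k l) = if j = k then c * e i l else 0 := by
  rw [← mul_assoc, mem_commutant_iff.1 hc i j, mul_assoc, he.mul_eq, mul_ite, mul_zero]

variable (R) in
def ofMatrix (he : IsMatrixUnits e) : Matrix ι ι (commutant R e) →ₐ[R] A where
  toFun M := ∑ i, ∑ j, (M i j : A) * e i j
  map_one' := by
    simp only [one_apply, apply_ite Subtype.val, OneMemClass.coe_one, ZeroMemClass.coe_zero,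
      ite_mul, one_mul, zero_mul, Finset.sum_ite_eq, Finset.mem_univ, if_true, he.sum_diag]
  map_mul' M N := by
    simp only [Finset.sum_mul_sum, mul_assoc, he.mul_mul_eq (N _ _).2, mul_ite, mul_zero,
      Finset.sum_ite_irrel, Finset.sum_const_zero, Finset.sum_ite_eq', Finset.mem_univ, if_true]
    simp only [mul_apply, AddSubmonoidClass.coe_finsetSum, MulMemClass.coe_mul, Finset.sum_mul,
      mul_assoc]
    exact Finset.sum_congr rfl fun i _ => Finset.sum_comm
  map_zero' := by simp
  map_add' M N := by simp [add_mul, Finset.sum_add_distrib]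
  commutes' r := by
    simp only [algebraMap_matrix_apply, apply_ite Subtype.val, ZeroMemClass.coe_zero, ite_mul,
      zero_mul, Finset.sum_ite_eq, Finset.mem_univ, if_true, Subalgebra.coe_algebraMap,
      ← Finset.mul_sum, he.sum_diag, mul_one]

theorem ofMatrix_apply (he : IsMatrixUnits e) (M : Matrix ι ι (commutant R e)) :
    he.ofMatrix R M = ∑ i, ∑ j, (M i j : A) * e i j := rfl

theorem sandwich_mem_commutant (he : IsMatrixUnits e) (a : A) (i j : ι) :
    ∑ k, e k i * a * e j k ∈ commutant R e := by
  refine mem_commutant_iff.2 fun p q => ?_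
  simp only [Finset.mul_sum, Finset.sum_mul, ← mul_assoc, he.mul_eq]
  simp only [mul_assoc _ _ (e p q), he.mul_eq]
  simp [mul_assoc]

variable (R) in
def toMatrix (he : IsMatrixUnits e) (a : A) : Matrix ι ι (commutant R e) :=
  of fun i j => ⟨∑ k, e k i * a * e j k, he.sandwich_mem_commutant a i j⟩

theorem toMatrix_ofMatrix (he : IsMatrixUnits e) (M : Matrix ι ι (commutant R e)) :
    he.toMatrix R (he.ofMatrix R M) = M := by
  ext i j
  simp only [toMatrix, ofMatrix_apply, of_apply, Finset.mul_sum, Finset.sum_mul, mul_assoc,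
    he.mul_mul_eq (M _ _).2, he.mul_eq, mul_ite, mul_zero,
    Finset.sum_ite_irrel, Finset.sum_const_zero, Finset.sum_ite_eq, Finset.sum_ite_eq',
    Finset.mem_univ, if_true]
  rw [← Finset.mul_sum, he.sum_diag, mul_one]

theorem ofMatrix_toMatrix (he : IsMatrixUnits e) (a : A) :
    he.ofMatrix R (he.toMatrix R a) = a := by
  simp only [toMatrix, ofMatrix_apply, of_apply, Finset.sum_mul, mul_assoc, he.mul_eq, mul_ite,
    mul_zero, Finset.sum_ite_eq', Finset.mem_univ, if_true]
  simp only [← Finset.mul_sum, ← Finset.sum_mul, he.sum_diag, mul_one, one_mul]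

variable (R) in
def algEquivMatrix (he : IsMatrixUnits e) : A ≃ₐ[R] Matrix ι ι (commutant R e) :=
  AlgEquiv.symm
    { he.ofMatrix R with
      invFun := he.toMatrix R
      left_inv := he.toMatrix_ofMatrix
      right_inv := he.ofMatrix_toMatrix }

end IsMatrixUnits

theorem Subalgebra.centralizer_eq_commutant {R ι A : Type*} [CommSemiring R] [Semiring A]
    [Algebra R A] [Fintype ι] [DecidableEq ι] (S : Subalgebra R A) (φ : S ≃ₐ[R] Matrix ι ι R) :
    centralizer R (S : Set A) =
      IsMatrixUnits.commutant R fun i j => (φ.symm (single i j 1) : A) := by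
  set e : ι → ι → A := fun i j => φ.symm (single i j 1)
  have hS : S ≤ Algebra.adjoin R (Set.range (Function.uncurry e)) := by
    intro x hx
    obtain ⟨M, rfl⟩ : ∃ M, (φ.symm M : A) = x := ⟨φ ⟨x, hx⟩, by simp⟩
    rw [matrix_eq_sum_single M]
    simp only [map_sum, AddSubmonoidClass.coe_finsetSum]
    refine Subalgebra.sum_mem _ fun i _ => Subalgebra.sum_mem _ fun j _ => ?_
    rw [← mul_one (M i j), ← smul_eq_mul, ← smul_single, map_smul, Subalgebra.coe_smul]
    exact Subalgebra.smul_mem _ (Algebra.subset_adjoin (Set.mem_range_self (i, j))) _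
  refine le_antisymm (centralizer_le _ _ _ ?_) ?_
  · exact Set.range_subset_iff.2 fun p => (φ.symm _).2
  · calc IsMatrixUnits.commutant R e
        = centralizer R (Set.range (Function.uncurry e)).centralizer.centralizer :=
          (centralizer_centralizer_centralizer R).symm
      _ ≤ centralizer R (S : Set A) :=
          centralizer_le R _ _ (hS.trans (Algebra.adjoin_le_centralizer_centralizer R _))

theorem tensor_decomposition_over_matrix_subalgebra_general
    (F : Type*) [Field F] (A : Type*) [Ring A] [Algebra F A]
    (n : ℕ) (A' : Subalgebra F A)
    (φ : A' ≃ₐ[F] Matrix (Fin n) (Fin n) F) :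
    Nonempty (A ≃ₐ[F] (A' ⊗[F] Subalgebra.centralizer F (A' : Set A))) ∧
      Nonempty (A ≃ₐ[F] Matrix (Fin n) (Fin n) (Subalgebra.centralizer F (A' : Set A))) := by
  set C := Subalgebra.centralizer F (A' : Set A)
  have he : IsMatrixUnits fun i j => (φ.symm (single i j 1) : A) :=
    ((isMatrixUnits_single F (Fin n)).map φ.symm).map A'.val
  let ψ : A ≃ₐ[F] Matrix (Fin n) (Fin n) C := (he.algEquivMatrix F).trans
    (AlgEquiv.mapMatrix (Subalgebra.equivOfEq _ _ (A'.centralizer_eq_commutant φ).symm))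
  refine ⟨⟨ψ.trans ?_⟩, ⟨ψ⟩⟩
  exact (matrixEquivTensor (Fin n) F C).trans
    ((Algebra.TensorProduct.comm F _ _).trans (Algebra.TensorProduct.congr φ.symm AlgEquiv.refl))

/-- If `A` is a unital locally matrix algebra and `A'` is a unital subalgebra with
`A' ≅ M_n(F)`, and `C` is the centralizer of `A'` in `A`, then `A ≅ A' ⊗_F C ≅ M_n(C)`
as `F`-algebras. -/
theorem tensor_decomposition_over_matrix_subalgebra
    (F : Type*) [Field F] (A : Type*) [Ring A] [Algebra F A]
    (hA : IsUnitalLocallyMatrix F A)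
    (n : ℕ) (hn : 1 ≤ n) (A' : Subalgebra F A)
    (φ : A' ≃ₐ[F] Matrix (Fin n) (Fin n) F) :
    Nonempty (A ≃ₐ[F] (A' ⊗[F] Subalgebra.centralizer F (A' : Set A))) ∧
      Nonempty (A ≃ₐ[F] Matrix (Fin n) (Fin n) (Subalgebra.centralizer F (A' : Set A))) :=
  tensor_decomposition_over_matrix_subalgebra_general F A n A' φ
end

section
/- Let A be a unital locally matrix algebra over a field F and let k ≥ 1. Then the matrix algebra M_k(A) is a unital locally matrix algebra over F and st(M_k(A)) = k·st(A), i.e., {m : m divides some d ∈ D(M_k(A))} = {m : m divides k·d for some d ∈ D(A)}. -/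
/-!
The entries of finitely many matrices in `M_k(A)` lie in some `B ≅ M_n(F)`, so the matrices lie
in `M_k(B) ≅ M_{kn}(F)`; this gives local matrixness of `M_k(A)` and `k * d ∈ D(M_k(A))` for
`d ∈ D(A)`.
Conversely, a subalgebra `C ≅ M_d(F)` of `M_k(A)` is finite-dimensional, hence lies in some
`M_k(B) ≅ M_{kn}(F)`, and a unital embedding `M_d(F) → M_N(F)` forces `d ∣ N`: the matrix
units `E_{1i}` split `F^N` into `d` copies of the image of `E_{11}`.
-/

open Matrix

section MatrixRepresentation

variable {R M ι : Type*} [CommRing R] [AddCommGroup M] [Module R M] [Fintype ι] [DecidableEq ι]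

def equivPiRangeOfMatrixAlgHom (f : Matrix ι ι R →ₐ[R] Module.End R M) (i₀ : ι) :
    M ≃ₗ[R] (ι → LinearMap.range (f (single i₀ i₀ 1))) where
  toFun x i := ⟨f (single i₀ i 1) x, f (single i₀ i 1) x, by
    rw [← Module.End.mul_apply, ← map_mul, single_mul_single_same, mul_one]⟩
  map_add' x y := by ext; simp
  map_smul' r x := by ext; simp
  invFun y := ∑ i, f (single i i₀ 1) (y i)
  left_inv x := by
    simp only [← Module.End.mul_apply, ← map_mul, single_mul_single_same, mul_one,
      ← LinearMap.sum_apply, ← map_sum, sum_single_one, map_one, Module.End.one_apply]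
  right_inv y := by
    ext i
    obtain ⟨z, hz⟩ := (y i).2
    simp only [map_sum, ← Module.End.mul_apply, ← map_mul]
    rw [Finset.sum_eq_single i (fun j _ hj => by
      rw [single_mul_single_of_ne _ _ _ _ (Ne.symm hj), map_zero, LinearMap.zero_apply])
      (by simp)]
    simp [← hz, ← Module.End.mul_apply, ← map_mul]

end MatrixRepresentation

theorem card_dvd_finrank_of_matrix_algHom {K V ι : Type*} [Field K] [AddCommGroup V] [Module K V]
    [FiniteDimensional K V] [Fintype ι] [DecidableEq ι] [Nonempty ι]
    (f : Matrix ι ι K →ₐ[K] Module.End K V) : Fintype.card ι ∣ Module.finrank K V := by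
  obtain ⟨i₀⟩ := ‹Nonempty ι›
  refine ⟨Module.finrank K (LinearMap.range (f (single i₀ i₀ 1))), ?_⟩
  rw [(equivPiRangeOfMatrixAlgHom f i₀).finrank_eq, Module.finrank_pi_fintype, Finset.sum_const,
    Finset.card_univ, smul_eq_mul]

theorem dvd_of_matrix_algHom {K : Type*} [Field K] {d N : ℕ} (hd : 0 < d)
    (f : Matrix (Fin d) (Fin d) K →ₐ[K] Matrix (Fin N) (Fin N) K) : d ∣ N := by
  have : Nonempty (Fin d) := ⟨⟨0, hd⟩⟩
  simpa using card_dvd_finrank_of_matrix_algHom (Matrix.toLinAlgEquiv'.toAlgHom.comp f)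

namespace Subalgebra

variable {R A : Type*} [CommSemiring R] [Semiring A] [Algebra R A]

theorem range_mapMatrix_val {n : Type*} [Fintype n] [DecidableEq n] (S : Subalgebra R A) :
    (S.val.mapMatrix : Matrix n n S →ₐ[R] Matrix n n A).range = S.matrix := by
  ext M
  refine ⟨?_, fun hM => ⟨of fun i j => ⟨M i j, hM i j⟩, rfl⟩⟩
  rintro ⟨N, rfl⟩ i j
  exact (N i j).2

noncomputable def matrixEquiv {n : Type*} [Fintype n] [DecidableEq n] (S : Subalgebra R A) :
    Matrix n n S ≃ₐ[R] S.matrix (n := n) :=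
  (AlgEquiv.ofInjective (S.val.mapMatrix (m := n))
    (Matrix.map_injective Subtype.val_injective)).trans (equivOfEq _ _ S.range_mapMatrix_val)

noncomputable def matrixEquivOfEquivMatrix {k n : ℕ} (S : Subalgebra R A)
    (e : S ≃ₐ[R] Matrix (Fin n) (Fin n) R) :
    S.matrix (n := Fin k) ≃ₐ[R] Matrix (Fin (k * n)) (Fin (k * n)) R :=
  S.matrixEquiv.symm.trans <| e.mapMatrix.trans <|
    (compAlgEquiv _ _ R R).trans (reindexAlgEquiv R R finProdFinEquiv)

end Subalgebra

section LocallyMatrix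

variable {F A : Type*} [Field F] [Ring A] [Algebra F A] {k : ℕ}

theorem mul_mem_matrixDegrees_matrix {d : ℕ} (hk : 1 ≤ k) (hd : d ∈ matrixDegrees F A) :
    k * d ∈ matrixDegrees F (Matrix (Fin k) (Fin k) A) := by
  obtain ⟨hd, B, ⟨e⟩⟩ := hd
  exact ⟨Nat.mul_pos hk hd, B.matrix, ⟨B.matrixEquivOfEquivMatrix e⟩⟩

namespace IsUnitalLocallyMatrix

theorem exists_subset_matrix (hA : IsUnitalLocallyMatrix F A)
    (s : Finset (Matrix (Fin k) (Fin k) A)) :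
    ∃ (n : ℕ) (B : Subalgebra F A), 1 ≤ n ∧ (↑s : Set (Matrix (Fin k) (Fin k) A)) ⊆
      (B.matrix : Subalgebra F (Matrix (Fin k) (Fin k) A)) ∧
      Nonempty (B ≃ₐ[F] Matrix (Fin n) (Fin n) F) := by
  classical
  obtain ⟨n, B, hn, hsub, he⟩ :=
    hA (s.biUnion fun M => Finset.univ.image fun p : Fin k × Fin k => M p.1 p.2)
  refine ⟨n, B, hn, fun M hM i j => hsub ?_, he⟩
  exact Finset.mem_biUnion.2 ⟨M, hM, Finset.mem_image_of_mem _ (Finset.mem_univ (i, j))⟩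

theorem matrix (hA : IsUnitalLocallyMatrix F A) (hk : 1 ≤ k) :
    IsUnitalLocallyMatrix F (Matrix (Fin k) (Fin k) A) := by
  intro s
  obtain ⟨n, B, hn, hsub, ⟨e⟩⟩ := hA.exists_subset_matrix s
  exact ⟨k * n, B.matrix, Nat.mul_pos hk hn, hsub, ⟨B.matrixEquivOfEquivMatrix e⟩⟩

theorem exists_dvd_mul_of_mem_matrixDegrees_matrix (hA : IsUnitalLocallyMatrix F A) {d : ℕ}
    (hd : d ∈ matrixDegrees F (Matrix (Fin k) (Fin k) A)) :
    ∃ n ∈ matrixDegrees F A, d ∣ k * n := by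
  obtain ⟨hd, C, ⟨e⟩⟩ := hd
  have hC : Module.Finite F C := Module.Finite.equiv e.symm.toLinearEquiv
  obtain ⟨s, hs⟩ := Module.Finite.iff_fg (N := Subalgebra.toSubmodule C) |>.1 hC
  obtain ⟨n, B, hn, hsub, ⟨g⟩⟩ := hA.exists_subset_matrix s
  have hle : C ≤ B.matrix :=
    Subalgebra.toSubmodule.le_iff_le.1 (hs ▸ Submodule.span_le.2 hsub)
  let embedding : Matrix (Fin d) (Fin d) F →ₐ[F] Matrix (Fin (k * n)) (Fin (k * n)) F :=
    (B.matrixEquivOfEquivMatrix g).toAlgHom.comp ((Subalgebra.inclusion hle).comp e.symm.toAlgHom)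
  exact ⟨n, ⟨hn, B, ⟨g⟩⟩, dvd_of_matrix_algHom hd embedding⟩

end IsUnitalLocallyMatrix

end LocallyMatrix

/-- For a unital locally matrix algebra `A` and `k ≥ 1`, the matrix algebra `M_k(A)` is
a unital locally matrix algebra and `st(M_k(A)) = k · st(A)`, encoded by divisor sets. -/
theorem matrix_isUnitalLocallyMatrix_and_steinitz
    (F : Type*) [Field F] (A : Type*) [Ring A] [Algebra F A]
    (hA : IsUnitalLocallyMatrix F A) (k : ℕ) (hk : 1 ≤ k) :
    IsUnitalLocallyMatrix F (Matrix (Fin k) (Fin k) A) ∧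
      {m : ℕ | ∃ d ∈ matrixDegrees F (Matrix (Fin k) (Fin k) A), m ∣ d} =
        {m : ℕ | ∃ d ∈ matrixDegrees F A, m ∣ k * d} := by
  refine ⟨hA.matrix hk, Set.ext fun m => ⟨?_, ?_⟩⟩
  · rintro ⟨d, hd, hmd⟩
    obtain ⟨n, hn, hdn⟩ := hA.exists_dvd_mul_of_mem_matrixDegrees_matrix hd
    exact ⟨n, hn, hmd.trans hdn⟩
  · rintro ⟨d, hd, hmd⟩
    exact ⟨k * d, mul_mem_matrixDegrees_matrix hk hd, hmd⟩
end

section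
/- Let A and B be unital locally matrix algebras over a field F. Then A ⊗_F B is a unital locally matrix algebra over F and st(A ⊗_F B) = st(A)·st(B), i.e., {m : m divides some d ∈ D(A ⊗_F B)} = {m : m divides a·b for some a ∈ D(A) and b ∈ D(B)}. -/
/-!
A finite subset of `A ⊗ B` lies in the image of `S ⊗ T` for finite-dimensional subspaces, hence
(enlarging them) for matrix subalgebras `S ≅ M_a(F)`, `T ≅ M_b(F)`; over a field `S ⊗ T` embeds
in `A ⊗ B`, and `M_a(F) ⊗ M_b(F) ≅ M_{ab}(F)`. Conversely, a copy of `M_d(F)` in `A ⊗ B` is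
finite-dimensional, so it sits unitally inside such an `M_{ab}(F)`, and a unital map
`M_d(F) → M_k(F)` forces `d ∣ k`: its matrix units split `F^k` into `d` isomorphic pieces.
-/

open scoped TensorProduct

namespace Matrix

section AlgHomToEnd

variable {F V ι : Type*} [Field F] [AddCommGroup V] [Module F V] [Fintype ι] [DecidableEq ι]

theorem algHom_single_apply_single_apply (φ : Matrix ι ι F →ₐ[F] Module.End F V)
    (i j k l : ι) (v : V) :
    φ (single i j 1) (φ (single k l 1) v) = if j = k then φ (single i l 1) v else 0 := by
  rw [← Module.End.mul_apply, ← map_mul]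
  split_ifs with h
  · rw [h, single_mul_single_same, one_mul]
  · rw [single_mul_single_of_ne (h := h), map_zero, LinearMap.zero_apply]

noncomputable def algHomLinearEquivPiRange (φ : Matrix ι ι F →ₐ[F] Module.End F V) (j : ι) :
    V ≃ₗ[F] (ι → LinearMap.range (φ (single j j 1))) where
  toFun v i := ⟨φ (single j i 1) v, φ (single j i 1) v, by
    rw [algHom_single_apply_single_apply, if_pos rfl]⟩
  map_add' v w := by ext; simp
  map_smul' r v := by ext; simp
  invFun w := ∑ i, φ (single i j 1) (w i)
  left_inv v := by
    simp only [algHom_single_apply_single_apply, if_true]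
    rw [← LinearMap.sum_apply, ← map_sum, sum_single_one, map_one, Module.End.one_apply]
  right_inv w := by
    ext i
    obtain ⟨u, hu⟩ := (w i).2
    simp [algHom_single_apply_single_apply, ← hu]

theorem finrank_eq_card_mul_finrank_range_algHom (φ : Matrix ι ι F →ₐ[F] Module.End F V) (j : ι) :
    Module.finrank F V =
      Fintype.card ι * Module.finrank F (LinearMap.range (φ (single j j 1))) := by
  rw [(algHomLinearEquivPiRange φ j).finrank_eq]
  simp [Module.finrank]

theorem card_dvd_finrank_of_algHom (φ : Matrix ι ι F →ₐ[F] Module.End F V) :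
    Fintype.card ι ∣ Module.finrank F V := by
  rcases isEmpty_or_nonempty ι with _ | ⟨⟨j⟩⟩
  · have h : (1 : Module.End F V) = 0 := by
      rw [← map_one φ, Subsingleton.elim (1 : Matrix ι ι F) 0, map_zero]
    have : Subsingleton V := ⟨fun v w => by
      simpa [sub_eq_zero] using LinearMap.congr_fun h (v - w)⟩
    rw [Module.finrank_zero_of_subsingleton]
    exact dvd_zero _
  · exact ⟨_, finrank_eq_card_mul_finrank_range_algHom φ j⟩

end AlgHomToEnd

theorem dvd_of_algHom {F : Type*} [Field F] {d k : ℕ}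
    (φ : Matrix (Fin d) (Fin d) F →ₐ[F] Matrix (Fin k) (Fin k) F) : d ∣ k := by
  simpa using card_dvd_finrank_of_algHom ((toLinAlgEquiv' (R := F)).toAlgHom.comp φ)

end Matrix

section TensorProduct

variable {F A B : Type*} [Field F] [Ring A] [Ring B] [Algebra F A] [Algebra F B]

theorem Algebra.TensorProduct.map_val_injective (S : Subalgebra F A) (T : Subalgebra F B) :
    Function.Injective (Algebra.TensorProduct.map S.val T.val) :=
  TensorProduct.map_injective_of_flat_flat _ _ Subtype.val_injective Subtype.val_injective

noncomputable def Subalgebra.tensorProduct (S : Subalgebra F A) (T : Subalgebra F B) :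
    Subalgebra F (A ⊗[F] B) :=
  (Algebra.TensorProduct.map S.val T.val).range

theorem Subalgebra.range_mapIncl_le_tensorProduct {S : Subalgebra F A} {T : Subalgebra F B}
    {P : Submodule F A} {Q : Submodule F B} (hP : P ≤ Subalgebra.toSubmodule S)
    (hQ : Q ≤ Subalgebra.toSubmodule T) :
    LinearMap.range (TensorProduct.mapIncl P Q) ≤ Subalgebra.toSubmodule (S.tensorProduct T) :=
  TensorProduct.range_mapIncl_mono hP hQ

noncomputable def Subalgebra.tensorProductAlgEquivMatrix {S : Subalgebra F A}
    {T : Subalgebra F B} {a b : ℕ} (eS : S ≃ₐ[F] Matrix (Fin a) (Fin a) F)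
    (eT : T ≃ₐ[F] Matrix (Fin b) (Fin b) F) :
    S.tensorProduct T ≃ₐ[F] Matrix (Fin (a * b)) (Fin (a * b)) F :=
  (AlgEquiv.ofInjective _ (Algebra.TensorProduct.map_val_injective S T)).symm
    |>.trans (Algebra.TensorProduct.congr eS eT)
    |>.trans (Matrix.kroneckerAlgEquiv _ _ F)
    |>.trans (Matrix.reindexAlgEquiv F F finProdFinEquiv)

theorem mul_mem_matrixDegrees_tensorProduct {a b : ℕ} (ha : a ∈ matrixDegrees F A)
    (hb : b ∈ matrixDegrees F B) : a * b ∈ matrixDegrees F (A ⊗[F] B) := by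
  obtain ⟨ha, S, ⟨eS⟩⟩ := ha
  obtain ⟨hb, T, ⟨eT⟩⟩ := hb
  exact ⟨Nat.mul_pos ha hb, S.tensorProduct T, ⟨Subalgebra.tensorProductAlgEquivMatrix eS eT⟩⟩

namespace IsUnitalLocallyMatrix

theorem exists_le_of_fg (h : IsUnitalLocallyMatrix F A) {P : Submodule F A} (hP : P.FG) :
    ∃ n ∈ matrixDegrees F A, ∃ S : Subalgebra F A, P ≤ Subalgebra.toSubmodule S ∧
      Nonempty (S ≃ₐ[F] Matrix (Fin n) (Fin n) F) := by
  obtain ⟨s, rfl⟩ := hP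
  obtain ⟨n, S, hn, hs, e⟩ := h s
  exact ⟨n, ⟨hn, S, e⟩, S, Submodule.span_le.mpr hs, e⟩

theorem exists_le_tensorProduct_of_fg (hA : IsUnitalLocallyMatrix F A)
    (hB : IsUnitalLocallyMatrix F B) {P : Submodule F (A ⊗[F] B)} (hP : P.FG) :
    ∃ a ∈ matrixDegrees F A, ∃ b ∈ matrixDegrees F B, ∃ C : Subalgebra F (A ⊗[F] B),
      P ≤ Subalgebra.toSubmodule C ∧
        Nonempty (C ≃ₐ[F] Matrix (Fin (a * b)) (Fin (a * b)) F) := by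
  obtain ⟨s, rfl⟩ := hP
  obtain ⟨M, N, hM, hN, hs⟩ :=
    TensorProduct.exists_finite_submodule_of_setFinite _ s.finite_toSet
  obtain ⟨a, ha, S, hMS, ⟨eS⟩⟩ := hA.exists_le_of_fg (Module.Finite.iff_fg.mp hM)
  obtain ⟨b, hb, T, hNT, ⟨eT⟩⟩ := hB.exists_le_of_fg (Module.Finite.iff_fg.mp hN)
  refine ⟨a, ha, b, hb, S.tensorProduct T, ?_, ⟨Subalgebra.tensorProductAlgEquivMatrix eS eT⟩⟩
  exact Submodule.span_le.mpr (hs.trans (Subalgebra.range_mapIncl_le_tensorProduct hMS hNT))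

end IsUnitalLocallyMatrix

end TensorProduct

/-- For unital locally matrix algebras `A`, `B` over `F`, the tensor product `A ⊗_F B`
is a unital locally matrix algebra and `st(A ⊗_F B) = st(A) · st(B)`, encoded by
divisor sets. -/
theorem tensorProduct_isUnitalLocallyMatrix_and_steinitz
    (F : Type*) [Field F]
    (A B : Type*) [Ring A] [Ring B] [Algebra F A] [Algebra F B]
    (hA : IsUnitalLocallyMatrix F A) (hB : IsUnitalLocallyMatrix F B) :
    IsUnitalLocallyMatrix F (A ⊗[F] B) ∧
      {m : ℕ | ∃ d ∈ matrixDegrees F (A ⊗[F] B), m ∣ d} =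
        {m : ℕ | ∃ a ∈ matrixDegrees F A, ∃ b ∈ matrixDegrees F B, m ∣ a * b} := by
  refine ⟨fun s => ?_, Set.ext fun m => ⟨?_, ?_⟩⟩
  · obtain ⟨a, ha, b, hb, C, hsC, hC⟩ :=
      hA.exists_le_tensorProduct_of_fg hB (Submodule.fg_span s.finite_toSet)
    exact ⟨a * b, C, Nat.mul_pos ha.1 hb.1, Submodule.subset_span.trans hsC, hC⟩
  · rintro ⟨d, ⟨-, C, ⟨e⟩⟩, hmd⟩
    have hC : (Subalgebra.toSubmodule C).FG :=
      Module.Finite.iff_fg.mp (Module.Finite.equiv e.symm.toLinearEquiv)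
    obtain ⟨a, ha, b, hb, C', hCC', ⟨e'⟩⟩ := hA.exists_le_tensorProduct_of_fg hB hC
    exact ⟨a, ha, b, hb, hmd.trans <| Matrix.dvd_of_algHom <|
      (e'.toAlgHom.comp (Subalgebra.inclusion hCC')).comp e.symm.toAlgHom⟩
  · rintro ⟨a, ha, b, hb, hm⟩
    exact ⟨a * b, mul_mem_matrixDegrees_tensorProduct ha hb, hm⟩
end

section
/- Let A be a unital locally matrix algebra over a field F. Then D(A) is directed under divisibility: for any m, n ∈ D(A) there exists k ∈ D(A) such that m divides k and n divides k. -/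
open Module

section DivisionRing

variable {K V ι : Type*} [DivisionRing K] [AddCommGroup V] [Module K V] [Fintype ι]

theorem CompleteOrthogonalIdempotents.finrank_eq_sum_finrank_range [FiniteDimensional K V]
    {e : ι → Module.End K V} (he : CompleteOrthogonalIdempotents e) :
    finrank K V = ∑ i, finrank K (LinearMap.range (e i)) := by
  classical
  have hsum (v : V) : ∑ i, e i v = v := by
    simpa using congrArg (· v) he.complete
  have hrange (i j : ι) (w : LinearMap.range (e i)) : e j w = if i = j then (w : V) else 0 := by
    obtain ⟨_, u, rfl⟩ := w
    by_cases hij : i = j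
    · subst hij
      simp [← Module.End.mul_apply, (he.idem i).eq]
    · simp [hij, ← Module.End.mul_apply, he.ortho (Ne.symm hij)]
  let φ : V →ₗ[K] Π i, LinearMap.range (e i) := LinearMap.pi fun i => (e i).rangeRestrict
  have hφ : Function.Bijective φ := by
    refine ⟨fun v v' h => ?_, fun w => ⟨∑ i, (w i : V), funext fun j => Subtype.ext ?_⟩⟩
    · rw [← hsum v, ← hsum v']
      exact Finset.sum_congr rfl fun i _ => congrArg Subtype.val (congrFun h i)
    · simp [φ, map_sum, hrange]
  rw [(LinearEquiv.ofBijective φ hφ).finrank_eq, Module.finrank_pi_fintype]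

theorem LinearMap.finrank_range_mul_mul_le [FiniteDimensional K V] (a b c : Module.End K V) :
    finrank K (LinearMap.range (a * b * c)) ≤ finrank K (LinearMap.range b) :=
  calc finrank K (LinearMap.range (a * b * c))
      = finrank K ((LinearMap.range (b * c)).map a) := by
        rw [mul_assoc, Module.End.mul_eq_comp, LinearMap.range_comp]
    _ ≤ finrank K (LinearMap.range (b * c)) := Submodule.finrank_map_le _ _
    _ ≤ finrank K (LinearMap.range b) := Submodule.finrank_mono (LinearMap.range_comp_le_range _ _)

end DivisionRing

theorem Matrix.completeOrthogonalIdempotents_single_one {R n : Type*} [Semiring R] [Fintype n]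
    [DecidableEq n] : CompleteOrthogonalIdempotents fun i : n => single i i (1 : R) where
  idem i := by simp [IsIdempotentElem, single_mul_single_same]
  ortho i j hij := by simp [hij]
  complete := sum_single_one

theorem Matrix.card_dvd_finrank_of_algHom_s14 {K V n : Type*} [Field K] [AddCommGroup V]
    [Module K V] [FiniteDimensional K V] [Fintype n] [DecidableEq n]
    (f : Matrix n n K →ₐ[K] Module.End K V) : Fintype.card n ∣ finrank K V := by
  let p : n → Module.End K V := fun i => f (single i i 1)
  have hp : CompleteOrthogonalIdempotents p :=
    completeOrthogonalIdempotents_single_one.map f.toRingHom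
  have hle (i j : n) : finrank K (LinearMap.range (p i)) ≤ finrank K (LinearMap.range (p j)) := by
    have : p i = f (single i j 1) * p j * f (single j i 1) := by
      simp [p, ← map_mul, single_mul_single_same]
    rw [this]
    exact LinearMap.finrank_range_mul_mul_le _ _ _
  rcases isEmpty_or_nonempty n with hn | ⟨⟨i₀⟩⟩
  · simp [hp.finrank_eq_sum_finrank_range]
  · rw [hp.finrank_eq_sum_finrank_range, Finset.card_univ.symm,
      Finset.sum_const_nat fun i _ => le_antisymm (hle i i₀) (hle i₀ i)]
    exact dvd_mul_right _ _

theorem Matrix.card_dvd_card_of_algHom {K m k : Type*} [Field K] [Fintype m] [DecidableEq m]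
    [Fintype k] [DecidableEq k] (f : Matrix m m K →ₐ[K] Matrix k k K) :
    Fintype.card m ∣ Fintype.card k := by
  simpa using card_dvd_finrank_of_algHom_s14 ((Matrix.toLinAlgEquiv' : _ ≃ₐ[K] _).toAlgHom.comp f)

theorem Subalgebra.exists_finset_le_iff_subset {R A : Type*} [CommSemiring R] [Semiring A]
    [Algebra R A] (B : Subalgebra R A) [Module.Finite R B] :
    ∃ s : Finset A, ∀ C : Subalgebra R A, B ≤ C ↔ ↑s ⊆ (C : Set A) := by
  obtain ⟨s, hs⟩ := (Module.Finite.iff_fg (N := Subalgebra.toSubmodule B)).mp ‹_›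
  refine ⟨s, fun C => ⟨fun hBC => ?_, fun hsC => ?_⟩⟩
  · exact (hs ▸ Submodule.subset_span).trans hBC
  · exact Subalgebra.toSubmodule.le_iff_le.mp (hs ▸ Submodule.span_le.mpr hsC)

theorem Subalgebra.card_dvd_card_of_le {F A m k : Type*} [Field F] [Ring A] [Algebra F A]
    [Fintype m] [DecidableEq m] [Fintype k] [DecidableEq k] {B C : Subalgebra F A} (hBC : B ≤ C)
    (eB : B ≃ₐ[F] Matrix m m F) (eC : C ≃ₐ[F] Matrix k k F) :
    Fintype.card m ∣ Fintype.card k :=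
  Matrix.card_dvd_card_of_algHom <|
    eC.toAlgHom.comp <| (Subalgebra.inclusion hBC).comp eB.symm.toAlgHom

/-- For a unital locally matrix algebra `A`, the set `D(A)` is directed under
divisibility. -/
theorem matrixDegrees_directed
    (F : Type*) [Field F] (A : Type*) [Ring A] [Algebra F A]
    (hA : IsUnitalLocallyMatrix F A) :
    ∀ m ∈ matrixDegrees F A, ∀ n ∈ matrixDegrees F A,
      ∃ k ∈ matrixDegrees F A, m ∣ k ∧ n ∣ k := by
  classical
  rintro m ⟨-, B, ⟨eB⟩⟩ n ⟨-, B', ⟨eB'⟩⟩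
  have : Module.Finite F B := .equiv eB.symm.toLinearEquiv
  have : Module.Finite F B' := .equiv eB'.symm.toLinearEquiv
  obtain ⟨s, hs⟩ := B.exists_finset_le_iff_subset
  obtain ⟨s', hs'⟩ := B'.exists_finset_le_iff_subset
  obtain ⟨k, C, hk, hss', ⟨eC⟩⟩ := hA (s ∪ s')
  rw [Finset.coe_union, Set.union_subset_iff] at hss'
  refine ⟨k, ⟨hk, C, ⟨eC⟩⟩, ?_, ?_⟩
  · simpa using Subalgebra.card_dvd_card_of_le ((hs C).mpr hss'.1) eB eC
  · simpa using Subalgebra.card_dvd_card_of_le ((hs' C).mpr hss'.2) eB' eC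
end
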